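/- arXiv:2205.01438 — 2 statements merged into one kernel-verified Lean document; each statement's English description precedes it below -/
import Mathlib

section
/- For every k ≥ 0 and every i ∈ {1,…,m} one has ‖π_i^{k+1} − π_i^k‖² ≤ (6r_i²/m²)·‖x^{τ_{k+1}} − x^{τ_k}‖² + (3r_i²/m²)·‖x_i^{k+1} − x_i^k‖². -/
open scoped RealInnerProductSpace
open Filter Topology

/-- `ℝⁿ` as a Euclidean space. -/
abbrev Vec (n : ℕ) := EuclideanSpace ℝ (Fin n)

private theorem fedgia_opbound (n : ℕ) (r : ℝ) (hr : 0 < r) (H : Vec n →L[ℝ] Vec n)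
    (hs : ∀ x y : Vec n, ⟪H x, y⟫ = ⟪x, H y⟫)
    (hp : ∀ x, 0 ≤ ⟪H x, x⟫)
    (hle : ∀ x, ⟪H x, x⟫ ≤ r * ‖x‖ ^ 2) :
    ∀ v, ‖H v‖ ≤ r * ‖v‖ := by
  have cs : ∀ v w : Vec n, ⟪H v, w⟫ ^ 2 ≤ ⟪H v, v⟫ * ⟪H w, w⟫ := by
    intro v w
    have h : ∀ t : ℝ, 0 ≤ ⟪H w, w⟫ * (t * t) + (2 * ⟪H v, w⟫) * t + ⟪H v, v⟫ := by
      intro t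
      have h0 := hp (v + t • w)
      have e : ⟪H (v + t • w), v + t • w⟫
          = ⟪H v, v⟫ + 2 * t * ⟪H v, w⟫ + t ^ 2 * ⟪H w, w⟫ := by
        simp only [map_add, map_smul, inner_add_left, inner_add_right,
          real_inner_smul_left, real_inner_smul_right]
        have e1 : ⟪H w, v⟫ = ⟪H v, w⟫ := by
          rw [hs w v]; exact real_inner_comm (H v) w
        rw [e1]; ring
      nlinarith [h0, e]
    have hd := discrim_le_zero h
    rw [discrim] at hd
    nlinarith [hd]
  intro v
  have h1 := cs v (H v)
  have h2 := hle v
  have h3 := hle (H v)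
  have hn1 : ⟪H v, H v⟫ = ‖H v‖ ^ 2 := real_inner_self_eq_norm_sq _
  have hp1 := hp v
  have key : ⟪H v, v⟫ * ⟪H (H v), H v⟫ ≤ (r * ‖v‖ ^ 2) * (r * ‖H v‖ ^ 2) :=
    mul_le_mul h2 h3 (hp (H v)) (by positivity)
  rcases eq_or_lt_of_le (norm_nonneg (H v)) with h0 | h0
  · rw [← h0]; positivity
  · have h4 : ‖H v‖ ^ 2 * ‖H v‖ ^ 2 ≤ (r * ‖v‖) ^ 2 * ‖H v‖ ^ 2 := by
      nlinarith [hn1, h1, key]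
    have h5 : 0 ≤ r * ‖v‖ := by positivity
    by_contra hc
    push_neg at hc
    have h6 : (r * ‖v‖) ^ 2 < ‖H v‖ ^ 2 := by nlinarith
    have h7 : (r * ‖v‖) ^ 2 * ‖H v‖ ^ 2 < ‖H v‖ ^ 2 * ‖H v‖ ^ 2 :=
      mul_lt_mul_of_pos_right h6 (by positivity)
    linarith
theorem fedgia_stmt2
    (n m k₀ : ℕ) (hn : 0 < n) (hm : 0 < m) (hk₀ : 0 < k₀)
    (σ : ℝ) (hσ : 0 < σ)
    (fi : Fin m → Vec n → ℝ)
    (ri : Fin m → ℝ)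
    (hfiC1 : ∀ i, ContDiff ℝ 1 (fi i))
    (hfib : ∀ i, BddBelow (Set.range (fi i)))
    (hri : ∀ i, 0 < ri i)
    (hlip : ∀ i x z, ‖gradient (fi i) x - gradient (fi i) z‖ ≤ ri i * ‖x - z‖)
    (H : Fin m → (Vec n →L[ℝ] Vec n))
    (hHsymm : ∀ i x y, ⟪H i x, y⟫ = ⟪x, H i y⟫)
    (hHpsd : ∀ i x, 0 ≤ ⟪H i x, x⟫)
    (hHle : ∀ i x, ⟪H i x, x⟫ ≤ ri i * ‖x‖ ^ 2)
    (hHdesc : ∀ i x z, fi i x ≤ fi i z + ⟪gradient (fi i) z, x - z⟫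
        + (1 / 2) * ⟪H i (x - z), x - z⟫)
    (xb : ℕ → Vec n)
    (xi pii zi : Fin m → ℕ → Vec n)
    (C : ℕ → Finset (Fin m))
    (hx0 : ∀ i, xi i 0 = xb 0)
    (hp0 : ∀ i, pii i 0 = -((m : ℝ)⁻¹ • gradient (fi i) (xb 0)))
    (hz0 : ∀ i, zi i 0 = xi i 0 + σ⁻¹ • pii i 0)
    (hagg : ∀ k : ℕ, k % k₀ = 0 → xb ((k + 1) / k₀) = (m : ℝ)⁻¹ • ∑ i, zi i k)
    (hupdx : ∀ k : ℕ, ∀ i ∈ C ((k + 1) / k₀),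
      (m : ℝ)⁻¹ • H i (xi i (k + 1) - xb ((k + 1) / k₀))
        + σ • (xi i (k + 1) - xb ((k + 1) / k₀))
        + (m : ℝ)⁻¹ • gradient (fi i) (xb ((k + 1) / k₀)) + pii i k = 0)
    (hupdp : ∀ k : ℕ, ∀ i ∈ C ((k + 1) / k₀),
      pii i (k + 1) = pii i k + σ • (xi i (k + 1) - xb ((k + 1) / k₀)))
    (hupdz : ∀ k : ℕ, ∀ i ∈ C ((k + 1) / k₀),
      zi i (k + 1) = xi i (k + 1) + σ⁻¹ • pii i (k + 1))
    (hfixx : ∀ k : ℕ, ∀ i ∉ C ((k + 1) / k₀), xi i (k + 1) = xb ((k + 1) / k₀))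
    (hfixp : ∀ k : ℕ, ∀ i ∉ C ((k + 1) / k₀),
      pii i (k + 1) = -((m : ℝ)⁻¹ • gradient (fi i) (xb ((k + 1) / k₀))))
    (hfixz : ∀ k : ℕ, ∀ i ∉ C ((k + 1) / k₀),
      zi i (k + 1) = xb ((k + 1) / k₀)
        - σ⁻¹ • ((m : ℝ)⁻¹ • gradient (fi i) (xb ((k + 1) / k₀)))) :
    ∀ k : ℕ, ∀ i : Fin m,
      ‖pii i (k + 1) - pii i k‖ ^ 2 ≤
        6 * ri i ^ 2 / (m : ℝ) ^ 2 * ‖xb ((k + 1) / k₀) - xb (k / k₀)‖ ^ 2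
          + 3 * ri i ^ 2 / (m : ℝ) ^ 2 * ‖xi i (k + 1) - xi i k‖ ^ 2 := by
  have hm' : (0 : ℝ) < m := Nat.cast_pos.mpr hm
  have hHnorm : ∀ i (v : Vec n), ‖H i v‖ ≤ ri i * ‖v‖ := fun i =>
    fedgia_opbound n (ri i) (hri i) (H i) (hHsymm i) (hHpsd i) (hHle i)
  have pkey : ∀ k : ℕ, ∀ i : Fin m, pii i k
      = -((m : ℝ)⁻¹ • (H i (xi i k - xb (k / k₀)) + gradient (fi i) (xb (k / k₀)))) := by
    intro k i
    cases k with
    | zero => simp [hp0, hx0, Nat.zero_div]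
    | succ k =>
      by_cases hi : i ∈ C ((k + 1) / k₀)
      · have h := hupdx k i hi
        rw [hupdp k i hi]
        have h3 : pii i k = -((m : ℝ)⁻¹ • H i (xi i (k + 1) - xb ((k + 1) / k₀))
            + σ • (xi i (k + 1) - xb ((k + 1) / k₀))
            + (m : ℝ)⁻¹ • gradient (fi i) (xb ((k + 1) / k₀))) := by
          rw [eq_neg_iff_add_eq_zero, ← h]; abel
        rw [h3, smul_add]; abel
      · simp [hfixp k i hi, hfixx k i hi]
  intro k i
  have hdiff : pii i (k + 1) - pii i k
      = -((m : ℝ)⁻¹ • (H i (xi i (k + 1) - xi i k)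
          - H i (xb ((k + 1) / k₀) - xb (k / k₀))
          + (gradient (fi i) (xb ((k + 1) / k₀)) - gradient (fi i) (xb (k / k₀))))) := by
    rw [pkey (k + 1) i, pkey k i]
    simp only [map_sub, smul_add, smul_sub]
    abel
  have hAz : (0:ℝ) ≤ ‖xb ((k + 1) / k₀) - xb (k / k₀)‖ := norm_nonneg _
  have hBz : (0:ℝ) ≤ ‖xi i (k + 1) - xi i k‖ := norm_nonneg _
  have hnorm : ‖pii i (k + 1) - pii i k‖
      ≤ (m : ℝ)⁻¹ * (ri i * ‖xi i (k + 1) - xi i k‖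
          + ri i * ‖xb ((k + 1) / k₀) - xb (k / k₀)‖
          + ri i * ‖xb ((k + 1) / k₀) - xb (k / k₀)‖) := by
    rw [hdiff, norm_neg, norm_smul, Real.norm_eq_abs, abs_of_nonneg (by positivity)]
    refine mul_le_mul_of_nonneg_left ?_ (by positivity)
    calc ‖H i (xi i (k + 1) - xi i k) - H i (xb ((k + 1) / k₀) - xb (k / k₀))
            + (gradient (fi i) (xb ((k + 1) / k₀)) - gradient (fi i) (xb (k / k₀)))‖
        ≤ ‖H i (xi i (k + 1) - xi i k) - H i (xb ((k + 1) / k₀) - xb (k / k₀))‖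
            + ‖gradient (fi i) (xb ((k + 1) / k₀)) - gradient (fi i) (xb (k / k₀))‖ :=
          norm_add_le _ _
      _ ≤ (‖H i (xi i (k + 1) - xi i k)‖ + ‖H i (xb ((k + 1) / k₀) - xb (k / k₀))‖)
            + ‖gradient (fi i) (xb ((k + 1) / k₀)) - gradient (fi i) (xb (k / k₀))‖ :=
          add_le_add_left (norm_sub_le _ _) _
      _ ≤ (ri i * ‖xi i (k + 1) - xi i k‖ + ri i * ‖xb ((k + 1) / k₀) - xb (k / k₀)‖)
            + ri i * ‖xb ((k + 1) / k₀) - xb (k / k₀)‖ :=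
          add_le_add (add_le_add (hHnorm i _) (hHnorm i _)) (hlip i _ _)
      _ = ri i * ‖xi i (k + 1) - xi i k‖ + ri i * ‖xb ((k + 1) / k₀) - xb (k / k₀)‖
            + ri i * ‖xb ((k + 1) / k₀) - xb (k / k₀)‖ := rfl
  have hsq := pow_le_pow_left₀ (norm_nonneg (pii i (k + 1) - pii i k)) hnorm 2
  have hfin : ((m : ℝ)⁻¹ * (ri i * ‖xi i (k + 1) - xi i k‖
          + ri i * ‖xb ((k + 1) / k₀) - xb (k / k₀)‖
          + ri i * ‖xb ((k + 1) / k₀) - xb (k / k₀)‖)) ^ 2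
      ≤ 6 * ri i ^ 2 / (m : ℝ) ^ 2 * ‖xb ((k + 1) / k₀) - xb (k / k₀)‖ ^ 2
          + 3 * ri i ^ 2 / (m : ℝ) ^ 2 * ‖xi i (k + 1) - xi i k‖ ^ 2 := by
    rw [div_eq_mul_inv, div_eq_mul_inv, ← inv_pow]
    nlinarith [sq_nonneg ((m : ℝ)⁻¹ * ri i
        * (‖xb ((k + 1) / k₀) - xb (k / k₀)‖ - ‖xi i (k + 1) - xi i k‖)),
      sq_nonneg ((m : ℝ)⁻¹ * ri i), inv_pos.mpr hm']
  linarith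
end

section
/- Assume σ ≥ 6r/m. Then for every s ∈ 𝕂, the full gradient of 𝓛 (with respect to all variables (x, X, Π) ∈ ℝⁿ × (ℝⁿ)^m × (ℝⁿ)^m) evaluated at Z^{s+1} satisfies ‖∇𝓛(Z^{s+1})‖ ≤ (2σ + 1)·√(m·ϖ_{s+1}), where ϖ_{s+1} := ∑_{i=1}^m (‖x^{τ_{s+1}} − x^{τ_s}‖² + ‖x_i^{s+1} − x_i^s‖²). -/
open scoped RealInnerProductSpace
open Filter Topology

/-- The blocks `(ℝⁿ)ᵐ` with the `ℓ²` (Euclidean) product structure. -/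
abbrev Blk (n m : ℕ) := PiLp 2 (fun _ : Fin m => Vec n)

/-- The full variable space `ℝⁿ × (ℝⁿ)ᵐ × (ℝⁿ)ᵐ` with the `ℓ²` product structure. -/
abbrev Dom (n m : ℕ) := WithLp 2 (Vec n × WithLp 2 (Blk n m × Blk n m))

/-- Packing a triple `(x, X, Π)` into the full variable space. -/
noncomputable def mkZ {n m : ℕ} (x : Vec n) (X P : Fin m → Vec n) : Dom n m :=
  (WithLp.equiv 2 _).symm (x, (WithLp.equiv 2 _).symm
    ((WithLp.equiv 2 _).symm X, (WithLp.equiv 2 _).symm P))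

/-- The augmented Lagrangian as a function on the full variable space. -/
noncomputable def LH {n m : ℕ} (σ : ℝ) (fi : Fin m → Vec n → ℝ) (z : Dom n m) : ℝ :=
  ∑ i, ((m : ℝ)⁻¹ * fi i ((WithLp.equiv 2 _ ((WithLp.equiv 2 _ z).2)).1 i)
      + ⟪(WithLp.equiv 2 _ ((WithLp.equiv 2 _ z).2)).1 i - (WithLp.equiv 2 _ z).1,
          (WithLp.equiv 2 _ ((WithLp.equiv 2 _ z).2)).2 i⟫
      + σ / 2 * ‖(WithLp.equiv 2 _ ((WithLp.equiv 2 _ z).2)).1 i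
          - (WithLp.equiv 2 _ z).1‖ ^ 2)

/-! ### Auxiliary projections and linear algebra -/

noncomputable def pX (n m : ℕ) : Dom n m →L[ℝ] Vec n :=
  (ContinuousLinearMap.fst ℝ _ _).comp
    (WithLp.prodContinuousLinearEquiv 2 ℝ (Vec n)
      (WithLp 2 (Blk n m × Blk n m))).toContinuousLinearMap

noncomputable def pB (n m : ℕ) : Dom n m →L[ℝ] (Blk n m × Blk n m) :=
  (WithLp.prodContinuousLinearEquiv 2 ℝ _ _).toContinuousLinearMap.comp
    ((ContinuousLinearMap.snd ℝ _ _).comp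
      (WithLp.prodContinuousLinearEquiv 2 ℝ (Vec n)
        (WithLp 2 (Blk n m × Blk n m))).toContinuousLinearMap)

noncomputable def pXi (n m : ℕ) (i : Fin m) : Dom n m →L[ℝ] Vec n :=
  (ContinuousLinearMap.proj i).comp
    ((PiLp.continuousLinearEquiv 2 ℝ _).toContinuousLinearMap.comp
      ((ContinuousLinearMap.fst ℝ _ _).comp (pB n m)))

noncomputable def pPi (n m : ℕ) (i : Fin m) : Dom n m →L[ℝ] Vec n :=
  (ContinuousLinearMap.proj i).comp
    ((PiLp.continuousLinearEquiv 2 ℝ _).toContinuousLinearMap.comp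
      ((ContinuousLinearMap.snd ℝ _ _).comp (pB n m)))

lemma inner_mkZ {n m : ℕ} (a : Vec n) (b c : Fin m → Vec n) (w : Dom n m) :
    ⟪mkZ a b c, w⟫ = ⟪a, pX n m w⟫ + ∑ i, (⟪b i, pXi n m i w⟫ + ⟪c i, pPi n m i w⟫) := by
  rw [WithLp.prod_inner_apply (mkZ a b c) w,
    WithLp.prod_inner_apply (mkZ a b c).ofLp.2 w.ofLp.2,
    PiLp.inner_apply ((mkZ a b c).ofLp.2.ofLp.1) (w.ofLp.2.ofLp.1),
    PiLp.inner_apply ((mkZ a b c).ofLp.2.ofLp.2) (w.ofLp.2.ofLp.2),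
    Finset.sum_add_distrib]
  rfl

lemma norm_mkZ_sq {n m : ℕ} (a : Vec n) (b c : Fin m → Vec n) :
    ‖mkZ a b c‖ ^ 2 = ‖a‖ ^ 2 + ∑ i, (‖b i‖ ^ 2 + ‖c i‖ ^ 2) := by
  rw [WithLp.prod_norm_sq_eq_of_L2 (mkZ a b c),
    WithLp.prod_norm_sq_eq_of_L2 ((mkZ a b c).snd),
    PiLp.norm_sq_eq_of_L2 _ ((mkZ a b c).snd.fst),
    PiLp.norm_sq_eq_of_L2 _ ((mkZ a b c).snd.snd),
    Finset.sum_add_distrib]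
  rfl

/-- The gradient of the augmented Lagrangian. -/
lemma hasGradientAt_LH {n m : ℕ} (σ : ℝ) (fi : Fin m → Vec n → ℝ)
    (x : Vec n) (X P : Fin m → Vec n) (hd : ∀ i, DifferentiableAt ℝ (fi i) (X i)) :
    HasGradientAt (LH σ fi)
      (mkZ (∑ i, (-(P i) - σ • (X i - x)))
        (fun i => (m : ℝ)⁻¹ • gradient (fi i) (X i) + P i + σ • (X i - x))
        (fun i => X i - x)) (mkZ x X P) := by
  rw [hasGradientAt_iff_hasFDerivAt]
  have hLH : LH σ fi = fun z : Dom n m => ∑ i,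
      ((m : ℝ)⁻¹ * fi i (pXi n m i z) + ⟪pXi n m i z - pX n m z, pPi n m i z⟫ +
        σ / 2 * ⟪pXi n m i z - pX n m z, pXi n m i z - pX n m z⟫) := by
    funext z; unfold LH
    congr 1; funext i
    rw [real_inner_self_eq_norm_sq]
    rfl
  rw [hLH]
  have hterm : ∀ i : Fin m, HasFDerivAt (fun z : Dom n m =>
      ((m : ℝ)⁻¹ * fi i (pXi n m i z) + ⟪pXi n m i z - pX n m z, pPi n m i z⟫ +
        σ / 2 * ⟪pXi n m i z - pX n m z, pXi n m i z - pX n m z⟫))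
      (((m : ℝ)⁻¹) • ((InnerProductSpace.toDual ℝ (Vec n)
            (gradient (fi i) (X i))).comp (pXi n m i))
        + (fderivInnerCLM ℝ ((X i - x : Vec n), P i)).comp
            ((pXi n m i - pX n m).prod (pPi n m i))
        + (σ / 2) • ((fderivInnerCLM ℝ ((X i - x : Vec n), (X i - x : Vec n))).comp
            ((pXi n m i - pX n m).prod (pXi n m i - pX n m)))) (mkZ x X P) := by
    intro i
    have hXi := (pXi n m i).hasFDerivAt (x := mkZ x X P)
    have hX := (pX n m).hasFDerivAt (x := mkZ x X P)
    have hPi := (pPi n m i).hasFDerivAt (x := mkZ x X P)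
    have h1 : HasFDerivAt (fun z => fi i (pXi n m i z))
        ((InnerProductSpace.toDual ℝ (Vec n) (gradient (fi i) (X i))).comp (pXi n m i))
        (mkZ x X P) :=
      HasFDerivAt.comp (mkZ x X P) ((hd i).hasGradientAt.hasFDerivAt) hXi
    exact ((h1.const_mul _).add (HasFDerivAt.inner ℝ (hXi.sub hX) hPi)).add
      ((HasFDerivAt.inner ℝ (hXi.sub hX) (hXi.sub hX)).const_mul _)
  refine (HasFDerivAt.fun_sum (fun i _ => hterm i)).congr_fderiv ?_
  apply ContinuousLinearMap.ext; intro w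
  rw [ContinuousLinearMap.sum_apply, InnerProductSpace.toDual_apply_apply, inner_mkZ, sum_inner,
    ← Finset.sum_add_distrib]
  refine Finset.sum_congr rfl fun i _ => ?_
  simp only [ContinuousLinearMap.add_apply, ContinuousLinearMap.smul_apply,
    ContinuousLinearMap.comp_apply, ContinuousLinearMap.prod_apply, ContinuousLinearMap.sub_apply,
    fderivInnerCLM_apply, InnerProductSpace.toDual_apply_apply, smul_eq_mul,
    inner_sub_left, inner_sub_right, inner_add_left, inner_neg_left,
    real_inner_smul_left, real_inner_smul_right]
  simp only [real_inner_comm (pXi n m i w), real_inner_comm (pX n m w)]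
  ring

lemma discr_aux (a b c : ℝ) (key : ∀ t : ℝ, 0 ≤ a + 2 * t * b + t ^ 2 * c) (hc : 0 ≤ c) :
    b ^ 2 ≤ a * c := by
  rcases eq_or_lt_of_le hc with hc0 | hc0
  · have hb : b = 0 := by
      by_contra hb
      have h1 := key (-(a + 1) / (2 * b))
      rw [← hc0] at h1
      have h2 : 2 * (-(a + 1) / (2 * b)) * b = -(a + 1) := by field_simp
      rw [h2] at h1
      nlinarith [h1, key 0]
    have h0 := key 0
    rw [hb, ← hc0]
    nlinarith [h0]
  · have h1 := key (-b / c)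
    have hc' : c ≠ 0 := ne_of_gt hc0
    have h3 := mul_le_mul_of_nonneg_right h1 (le_of_lt hc0)
    rw [zero_mul] at h3
    have h4 : (a + 2 * (-b / c) * b + (-b / c) ^ 2 * c) * c = a * c - b ^ 2 := by
      field_simp
      ring
    rw [h4] at h3
    linarith

lemma psd_cauchy {n : ℕ} (T : Vec n →L[ℝ] Vec n)
    (hsymm : ∀ x y : Vec n, ⟪T x, y⟫ = ⟪x, T y⟫) (hpsd : ∀ x : Vec n, 0 ≤ ⟪T x, x⟫)
    (u w : Vec n) : ⟪T u, w⟫ ^ 2 ≤ ⟪T u, u⟫ * ⟪T w, w⟫ := by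
  have hflip : ⟪T w, u⟫ = ⟪T u, w⟫ := by
    rw [hsymm w u, real_inner_comm]
  refine discr_aux _ _ _ (fun t => ?_) (hpsd w)
  have h := hpsd (u + t • w)
  simp only [map_add, map_smul, inner_add_left, inner_add_right, real_inner_smul_left,
    real_inner_smul_right] at h
  rw [hflip] at h
  nlinarith [h]

lemma opnorm_bound {n : ℕ} (T : Vec n →L[ℝ] Vec n) (r : ℝ) (hr : 0 ≤ r)
    (hsymm : ∀ x y : Vec n, ⟪T x, y⟫ = ⟪x, T y⟫) (hpsd : ∀ x : Vec n, 0 ≤ ⟪T x, x⟫)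
    (hle : ∀ x : Vec n, ⟪T x, x⟫ ≤ r * ‖x‖ ^ 2) (v : Vec n) : ‖T v‖ ≤ r * ‖v‖ := by
  rcases eq_or_lt_of_le (norm_nonneg (T v)) with h0 | h0
  · rw [← h0]; positivity
  · have h1 := psd_cauchy T hsymm hpsd v (T v)
    have h2 : ⟪T v, T v⟫ = ‖T v‖ ^ 2 := real_inner_self_eq_norm_sq _
    have h5 : ‖T v‖ ^ 2 * ‖T v‖ ^ 2 ≤ (r * ‖v‖ ^ 2) * (r * ‖T v‖ ^ 2) := by
      calc ‖T v‖ ^ 2 * ‖T v‖ ^ 2 = ⟪T v, T v⟫ ^ 2 := by rw [h2]; ring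
        _ ≤ ⟪T v, v⟫ * ⟪T (T v), T v⟫ := h1
        _ ≤ (r * ‖v‖ ^ 2) * (r * ‖T v‖ ^ 2) :=
            mul_le_mul (hle v) (hle (T v)) (hpsd (T v)) (by positivity)
    have h6 : ‖T v‖ ^ 2 ≤ (r * ‖v‖) ^ 2 := by
      nlinarith [h5, mul_pos h0 h0]
    nlinarith [h6, h0, mul_nonneg hr (norm_nonneg v)]

set_option maxHeartbeats 2000000 in
theorem fedgia_stmt4
    (n m k₀ : ℕ) (hn : 0 < n) (hm : 0 < m) (hk₀ : 0 < k₀)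
    (σ : ℝ) (hσ : 0 < σ)
    (fi : Fin m → Vec n → ℝ)
    (ri : Fin m → ℝ)
    (hfiC1 : ∀ i, ContDiff ℝ 1 (fi i))
    (hfib : ∀ i, BddBelow (Set.range (fi i)))
    (hri : ∀ i, 0 < ri i)
    (hlip : ∀ i x z, ‖gradient (fi i) x - gradient (fi i) z‖ ≤ ri i * ‖x - z‖)
    (H : Fin m → (Vec n →L[ℝ] Vec n))
    (hHsymm : ∀ i x y, ⟪H i x, y⟫ = ⟪x, H i y⟫)
    (hHpsd : ∀ i x, 0 ≤ ⟪H i x, x⟫)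
    (hHle : ∀ i x, ⟪H i x, x⟫ ≤ ri i * ‖x‖ ^ 2)
    (hHdesc : ∀ i x z, fi i x ≤ fi i z + ⟪gradient (fi i) z, x - z⟫
        + (1 / 2) * ⟪H i (x - z), x - z⟫)
    (xb : ℕ → Vec n)
    (xi pii zi : Fin m → ℕ → Vec n)
    (C : ℕ → Finset (Fin m))
    (hx0 : ∀ i, xi i 0 = xb 0)
    (hp0 : ∀ i, pii i 0 = -((m : ℝ)⁻¹ • gradient (fi i) (xb 0)))
    (hz0 : ∀ i, zi i 0 = xi i 0 + σ⁻¹ • pii i 0)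
    (hagg : ∀ k : ℕ, k % k₀ = 0 → xb ((k + 1) / k₀) = (m : ℝ)⁻¹ • ∑ i, zi i k)
    (hupdx : ∀ k : ℕ, ∀ i ∈ C ((k + 1) / k₀),
      (m : ℝ)⁻¹ • H i (xi i (k + 1) - xb ((k + 1) / k₀))
        + σ • (xi i (k + 1) - xb ((k + 1) / k₀))
        + (m : ℝ)⁻¹ • gradient (fi i) (xb ((k + 1) / k₀)) + pii i k = 0)
    (hupdp : ∀ k : ℕ, ∀ i ∈ C ((k + 1) / k₀),
      pii i (k + 1) = pii i k + σ • (xi i (k + 1) - xb ((k + 1) / k₀)))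
    (hupdz : ∀ k : ℕ, ∀ i ∈ C ((k + 1) / k₀),
      zi i (k + 1) = xi i (k + 1) + σ⁻¹ • pii i (k + 1))
    (hfixx : ∀ k : ℕ, ∀ i ∉ C ((k + 1) / k₀), xi i (k + 1) = xb ((k + 1) / k₀))
    (hfixp : ∀ k : ℕ, ∀ i ∉ C ((k + 1) / k₀),
      pii i (k + 1) = -((m : ℝ)⁻¹ • gradient (fi i) (xb ((k + 1) / k₀))))
    (hfixz : ∀ k : ℕ, ∀ i ∉ C ((k + 1) / k₀),
      zi i (k + 1) = xb ((k + 1) / k₀)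
        - σ⁻¹ • ((m : ℝ)⁻¹ • gradient (fi i) (xb ((k + 1) / k₀))))
    (hσr : ∀ i, 6 * ri i / (m : ℝ) ≤ σ) :
    ∀ s : ℕ, s % k₀ = 0 →
      ‖gradient (LH σ fi) (mkZ (xb ((s + 1) / k₀)) (fun i => xi i (s + 1))
          (fun i => pii i (s + 1)))‖ ≤
        (2 * σ + 1) * Real.sqrt (m * ∑ i, (‖xb ((s + 1) / k₀) - xb (s / k₀)‖ ^ 2
          + ‖xi i (s + 1) - xi i s‖ ^ 2)) := by
  intro s hs
  have hσ0 : σ ≠ 0 := ne_of_gt hσ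
  have hmR : (0 : ℝ) < (m : ℝ) := by exact_mod_cast hm
  have hm0 : (m : ℝ) ≠ 0 := ne_of_gt hmR
  have hm1 : (1 : ℝ) ≤ (m : ℝ) := by exact_mod_cast hm
  have hdiff : ∀ (i : Fin m) (y : Vec n), DifferentiableAt ℝ (fi i) y :=
    fun i y => ((hfiC1 i).differentiable one_ne_zero).differentiableAt
  have hri6 : ∀ i, ri i / (m : ℝ) ≤ σ / 6 := by
    intro i
    have h := hσr i
    have : 6 * (ri i / (m : ℝ)) = 6 * ri i / (m : ℝ) := by ring
    linarith [this ▸ h]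
  have Hnorm : ∀ (i : Fin m) (v : Vec n), ‖H i v‖ ≤ ri i * ‖v‖ :=
    fun i v => opnorm_bound (H i) (ri i) (hri i).le (hHsymm i) (hHpsd i) (hHle i) v
  -- multiplier identity
  have hF2 : ∀ (i : Fin m) (k : ℕ),
      pii i k = -((m : ℝ)⁻¹ • (gradient (fi i) (xb (k / k₀))
        + H i (xi i k - xb (k / k₀)))) := by
    intro i k
    cases k with
    | zero =>
      rw [Nat.zero_div, hp0 i, hx0 i]
      simp
    | succ k =>
      by_cases hC : i ∈ C ((k + 1) / k₀)
      · have h1 := hupdx k i hC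
        have h2 := hupdp k i hC
        have h1' := eq_neg_of_add_eq_zero_right h1
        rw [h2, h1']
        module
      · rw [hfixp k i hC, hfixx k i hC]
        simp
  -- z identity
  have hF1 : ∀ (i : Fin m) (k : ℕ), zi i k = xi i k + σ⁻¹ • pii i k := by
    intro i k
    cases k with
    | zero => exact hz0 i
    | succ k =>
      by_cases hC : i ∈ C ((k + 1) / k₀)
      · exact hupdz k i hC
      · rw [hfixz k i hC, hfixx k i hC, hfixp k i hC, smul_neg, ← sub_eq_add_neg]
  have hzk : ∀ (i : Fin m) (k : ℕ), σ • zi i k = σ • xi i k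
      - (m : ℝ)⁻¹ • (gradient (fi i) (xb (k / k₀)) + H i (xi i k - xb (k / k₀))) := by
    intro i k
    rw [hF1 i k, hF2 i k]
    match_scalars <;> field_simp
  -- gradient computation
  have hgr : gradient (LH σ fi)
      (mkZ (xb ((s + 1) / k₀)) (fun i => xi i (s + 1)) (fun i => pii i (s + 1)))
      = mkZ (∑ i, (-(pii i (s + 1)) - σ • (xi i (s + 1) - xb ((s + 1) / k₀))))
        (fun i => (m : ℝ)⁻¹ • gradient (fi i) (xi i (s + 1)) + pii i (s + 1)
          + σ • (xi i (s + 1) - xb ((s + 1) / k₀)))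
        (fun i => xi i (s + 1) - xb ((s + 1) / k₀)) :=
    HasGradientAt.gradient (hasGradientAt_LH σ fi (xb ((s + 1) / k₀))
      (fun i => xi i (s + 1)) (fun i => pii i (s + 1)) (fun i => hdiff i _))
  rw [hgr]
  -- scalar abbreviations are written out explicitly below
  -- bound on the primal blocks
  have hGP : ∀ i, ‖xi i (s + 1) - xb ((s + 1) / k₀)‖
      ≤ (2 * ‖xb ((s + 1) / k₀) - xb (s / k₀)‖ + ‖xi i (s + 1) - xi i s‖) / 6 := by
    intro i
    by_cases hC : i ∈ C ((s + 1) / k₀)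
    · have h2 := hupdp s i hC
      have heq : σ • (xi i (s + 1) - xb ((s + 1) / k₀)) = pii i (s + 1) - pii i s := by
        rw [h2]; abel
      rw [hF2 i (s + 1), hF2 i s] at heq
      have heq2 : σ • (xi i (s + 1) - xb ((s + 1) / k₀))
          = -((m : ℝ)⁻¹ • (gradient (fi i) (xb ((s + 1) / k₀))
              - gradient (fi i) (xb (s / k₀))))
            - (m : ℝ)⁻¹ • H i ((xi i (s + 1) - xi i s)
              - (xb ((s + 1) / k₀) - xb (s / k₀))) := by
        rw [heq]
        simp only [map_sub]
        module
      have hb1 : ‖-((m : ℝ)⁻¹ • (gradient (fi i) (xb ((s + 1) / k₀))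
          - gradient (fi i) (xb (s / k₀))))‖
          ≤ (m : ℝ)⁻¹ * (ri i * ‖xb ((s + 1) / k₀) - xb (s / k₀)‖) := by
        rw [norm_neg, norm_smul, Real.norm_of_nonneg (by positivity : (0:ℝ) ≤ (m : ℝ)⁻¹)]
        exact mul_le_mul_of_nonneg_left (hlip i _ _) (by positivity)
      have hb2 : ‖(m : ℝ)⁻¹ • H i ((xi i (s + 1) - xi i s)
          - (xb ((s + 1) / k₀) - xb (s / k₀)))‖
          ≤ (m : ℝ)⁻¹ * (ri i * (‖xi i (s + 1) - xi i s‖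
            + ‖xb ((s + 1) / k₀) - xb (s / k₀)‖)) := by
        rw [norm_smul, Real.norm_of_nonneg (by positivity : (0:ℝ) ≤ (m : ℝ)⁻¹)]
        refine mul_le_mul_of_nonneg_left ?_ (by positivity)
        refine (Hnorm i _).trans ?_
        exact mul_le_mul_of_nonneg_left (norm_sub_le _ _) (hri i).le
      have hσu : σ * ‖xi i (s + 1) - xb ((s + 1) / k₀)‖
          ≤ σ * ((2 * ‖xb ((s + 1) / k₀) - xb (s / k₀)‖ + ‖xi i (s + 1) - xi i s‖) / 6) := by
        have hnorm : σ * ‖xi i (s + 1) - xb ((s + 1) / k₀)‖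
            = ‖σ • (xi i (s + 1) - xb ((s + 1) / k₀))‖ := by
          rw [norm_smul, Real.norm_of_nonneg hσ.le]
        rw [hnorm, heq2]
        have htri := (norm_sub_le (-((m : ℝ)⁻¹ • (gradient (fi i) (xb ((s + 1) / k₀))
            - gradient (fi i) (xb (s / k₀)))))
          ((m : ℝ)⁻¹ • H i ((xi i (s + 1) - xi i s) - (xb ((s + 1) / k₀) - xb (s / k₀)))))
        have hr1 : (m : ℝ)⁻¹ * (ri i * ‖xb ((s + 1) / k₀) - xb (s / k₀)‖)
            ≤ σ / 6 * ‖xb ((s + 1) / k₀) - xb (s / k₀)‖ := by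
          have := hri6 i
          have h0 : (0:ℝ) ≤ ‖xb ((s + 1) / k₀) - xb (s / k₀)‖ := norm_nonneg _
          calc (m : ℝ)⁻¹ * (ri i * ‖xb ((s + 1) / k₀) - xb (s / k₀)‖)
              = (ri i / (m : ℝ)) * ‖xb ((s + 1) / k₀) - xb (s / k₀)‖ := by ring
            _ ≤ σ / 6 * ‖xb ((s + 1) / k₀) - xb (s / k₀)‖ :=
              mul_le_mul_of_nonneg_right (hri6 i) h0
        have hr2 : (m : ℝ)⁻¹ * (ri i * (‖xi i (s + 1) - xi i s‖
              + ‖xb ((s + 1) / k₀) - xb (s / k₀)‖))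
            ≤ σ / 6 * (‖xi i (s + 1) - xi i s‖ + ‖xb ((s + 1) / k₀) - xb (s / k₀)‖) := by
          have h0 : (0:ℝ) ≤ ‖xi i (s + 1) - xi i s‖ + ‖xb ((s + 1) / k₀) - xb (s / k₀)‖ := by
            positivity
          calc (m : ℝ)⁻¹ * (ri i * (‖xi i (s + 1) - xi i s‖
                + ‖xb ((s + 1) / k₀) - xb (s / k₀)‖))
              = (ri i / (m : ℝ)) * (‖xi i (s + 1) - xi i s‖
                + ‖xb ((s + 1) / k₀) - xb (s / k₀)‖) := by ring
            _ ≤ _ := mul_le_mul_of_nonneg_right (hri6 i) h0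
        calc ‖_ - _‖ ≤ _ := htri
          _ ≤ _ := add_le_add hb1 hb2
          _ ≤ σ / 6 * ‖xb ((s + 1) / k₀) - xb (s / k₀)‖
              + σ / 6 * (‖xi i (s + 1) - xi i s‖ + ‖xb ((s + 1) / k₀) - xb (s / k₀)‖) :=
            add_le_add hr1 hr2
          _ = σ * ((2 * ‖xb ((s + 1) / k₀) - xb (s / k₀)‖ + ‖xi i (s + 1) - xi i s‖) / 6) := by
            ring
      exact le_of_mul_le_mul_left hσu hσ
    · rw [hfixx s i hC, sub_self, norm_zero]
      positivity
  -- bound on the dual blocks of the gradient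
  have hGX : ∀ i, ‖(m : ℝ)⁻¹ • gradient (fi i) (xi i (s + 1)) + pii i (s + 1)
      + σ • (xi i (s + 1) - xb ((s + 1) / k₀))‖
      ≤ (4 * σ / 3) * ‖xi i (s + 1) - xb ((s + 1) / k₀)‖ := by
    intro i
    have heq : (m : ℝ)⁻¹ • gradient (fi i) (xi i (s + 1)) + pii i (s + 1)
        + σ • (xi i (s + 1) - xb ((s + 1) / k₀))
        = ((m : ℝ)⁻¹ • (gradient (fi i) (xi i (s + 1))
            - gradient (fi i) (xb ((s + 1) / k₀)))
          - (m : ℝ)⁻¹ • H i (xi i (s + 1) - xb ((s + 1) / k₀)))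
          + σ • (xi i (s + 1) - xb ((s + 1) / k₀)) := by
      rw [hF2 i (s + 1)]
      module
    rw [heq]
    have h1 : ‖(m : ℝ)⁻¹ • (gradient (fi i) (xi i (s + 1))
        - gradient (fi i) (xb ((s + 1) / k₀)))‖
        ≤ σ / 6 * ‖xi i (s + 1) - xb ((s + 1) / k₀)‖ := by
      rw [norm_smul, Real.norm_of_nonneg (by positivity : (0:ℝ) ≤ (m : ℝ)⁻¹)]
      calc (m : ℝ)⁻¹ * ‖gradient (fi i) (xi i (s + 1))
            - gradient (fi i) (xb ((s + 1) / k₀))‖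
          ≤ (m : ℝ)⁻¹ * (ri i * ‖xi i (s + 1) - xb ((s + 1) / k₀)‖) :=
          mul_le_mul_of_nonneg_left (hlip i _ _) (by positivity)
        _ = (ri i / (m : ℝ)) * ‖xi i (s + 1) - xb ((s + 1) / k₀)‖ := by ring
        _ ≤ σ / 6 * ‖xi i (s + 1) - xb ((s + 1) / k₀)‖ :=
          mul_le_mul_of_nonneg_right (hri6 i) (norm_nonneg _)
    have h2 : ‖(m : ℝ)⁻¹ • H i (xi i (s + 1) - xb ((s + 1) / k₀))‖
        ≤ σ / 6 * ‖xi i (s + 1) - xb ((s + 1) / k₀)‖ := by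
      rw [norm_smul, Real.norm_of_nonneg (by positivity : (0:ℝ) ≤ (m : ℝ)⁻¹)]
      calc (m : ℝ)⁻¹ * ‖H i (xi i (s + 1) - xb ((s + 1) / k₀))‖
          ≤ (m : ℝ)⁻¹ * (ri i * ‖xi i (s + 1) - xb ((s + 1) / k₀)‖) :=
          mul_le_mul_of_nonneg_left (Hnorm i _) (by positivity)
        _ = (ri i / (m : ℝ)) * ‖xi i (s + 1) - xb ((s + 1) / k₀)‖ := by ring
        _ ≤ σ / 6 * ‖xi i (s + 1) - xb ((s + 1) / k₀)‖ :=
          mul_le_mul_of_nonneg_right (hri6 i) (norm_nonneg _)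
    have h3 : ‖σ • (xi i (s + 1) - xb ((s + 1) / k₀))‖
        = σ * ‖xi i (s + 1) - xb ((s + 1) / k₀)‖ := by
      rw [norm_smul, Real.norm_of_nonneg hσ.le]
    calc ‖_ + _‖ ≤ ‖(m : ℝ)⁻¹ • (gradient (fi i) (xi i (s + 1))
            - gradient (fi i) (xb ((s + 1) / k₀)))
          - (m : ℝ)⁻¹ • H i (xi i (s + 1) - xb ((s + 1) / k₀))‖
          + ‖σ • (xi i (s + 1) - xb ((s + 1) / k₀))‖ := norm_add_le _ _
      _ ≤ (‖(m : ℝ)⁻¹ • (gradient (fi i) (xi i (s + 1))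
            - gradient (fi i) (xb ((s + 1) / k₀)))‖
          + ‖(m : ℝ)⁻¹ • H i (xi i (s + 1) - xb ((s + 1) / k₀))‖)
          + ‖σ • (xi i (s + 1) - xb ((s + 1) / k₀))‖ :=
        add_le_add_left (norm_sub_le _ _) _
      _ ≤ (σ / 6 * ‖xi i (s + 1) - xb ((s + 1) / k₀)‖
          + σ / 6 * ‖xi i (s + 1) - xb ((s + 1) / k₀)‖)
          + σ * ‖xi i (s + 1) - xb ((s + 1) / k₀)‖ := by
        rw [h3]; exact add_le_add (add_le_add h1 h2) le_rfl
      _ = (4 * σ / 3) * ‖xi i (s + 1) - xb ((s + 1) / k₀)‖ := by ring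
  -- the x-block of the gradient as a telescoping z-difference
  have hGv_eq : (∑ i, (-(pii i (s + 1)) - σ • (xi i (s + 1) - xb ((s + 1) / k₀))))
      = ∑ i, (σ • zi i s - σ • zi i (s + 1)) := by
    have hsum : ∑ i : Fin m, (σ • zi i s) = ∑ i : Fin m, σ • xb ((s + 1) / k₀) := by
      rw [← Finset.smul_sum, Finset.sum_const, Finset.card_univ, Fintype.card_fin,
        hagg s hs, ← Nat.cast_smul_eq_nsmul ℝ]
      match_scalars <;> field_simp
    conv_rhs => rw [Finset.sum_sub_distrib]
    rw [hsum, ← Finset.sum_sub_distrib]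
    refine Finset.sum_congr rfl fun i _ => ?_
    rw [hF1 i (s + 1)]
    match_scalars <;> field_simp
  have hzd : ∀ i, ‖σ • zi i s - σ • zi i (s + 1)‖
      ≤ 7 * σ / 6 * ‖xi i (s + 1) - xi i s‖
        + σ / 3 * ‖xb ((s + 1) / k₀) - xb (s / k₀)‖ := by
    intro i
    rw [hzk i s, hzk i (s + 1)]
    have heq : (σ • xi i s - (m : ℝ)⁻¹ • (gradient (fi i) (xb (s / k₀))
          + H i (xi i s - xb (s / k₀))))
        - (σ • xi i (s + 1) - (m : ℝ)⁻¹ • (gradient (fi i) (xb ((s + 1) / k₀))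
          + H i (xi i (s + 1) - xb ((s + 1) / k₀))))
        = σ • (xi i s - xi i (s + 1))
          - (m : ℝ)⁻¹ • (gradient (fi i) (xb (s / k₀))
            - gradient (fi i) (xb ((s + 1) / k₀)))
          - (m : ℝ)⁻¹ • H i ((xi i s - xi i (s + 1))
            + (xb ((s + 1) / k₀) - xb (s / k₀))) := by
      simp only [map_sub, map_add]
      module
    rw [heq]
    have hA : ‖σ • (xi i s - xi i (s + 1))‖ = σ * ‖xi i (s + 1) - xi i s‖ := by
      rw [norm_smul, Real.norm_of_nonneg hσ.le, norm_sub_rev]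
    have hB : ‖(m : ℝ)⁻¹ • (gradient (fi i) (xb (s / k₀))
        - gradient (fi i) (xb ((s + 1) / k₀)))‖
        ≤ σ / 6 * ‖xb ((s + 1) / k₀) - xb (s / k₀)‖ := by
      rw [norm_smul, Real.norm_of_nonneg (by positivity : (0:ℝ) ≤ (m : ℝ)⁻¹)]
      calc (m : ℝ)⁻¹ * ‖gradient (fi i) (xb (s / k₀)) - gradient (fi i) (xb ((s + 1) / k₀))‖
          ≤ (m : ℝ)⁻¹ * (ri i * ‖xb (s / k₀) - xb ((s + 1) / k₀)‖) :=
          mul_le_mul_of_nonneg_left (hlip i _ _) (by positivity)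
        _ = (ri i / (m : ℝ)) * ‖xb ((s + 1) / k₀) - xb (s / k₀)‖ := by
          rw [norm_sub_rev]; ring
        _ ≤ σ / 6 * ‖xb ((s + 1) / k₀) - xb (s / k₀)‖ :=
          mul_le_mul_of_nonneg_right (hri6 i) (norm_nonneg _)
    have hC : ‖(m : ℝ)⁻¹ • H i ((xi i s - xi i (s + 1))
        + (xb ((s + 1) / k₀) - xb (s / k₀)))‖
        ≤ σ / 6 * (‖xi i (s + 1) - xi i s‖ + ‖xb ((s + 1) / k₀) - xb (s / k₀)‖) := by
      rw [norm_smul, Real.norm_of_nonneg (by positivity : (0:ℝ) ≤ (m : ℝ)⁻¹)]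
      calc (m : ℝ)⁻¹ * ‖H i ((xi i s - xi i (s + 1)) + (xb ((s + 1) / k₀) - xb (s / k₀)))‖
          ≤ (m : ℝ)⁻¹ * (ri i * ‖(xi i s - xi i (s + 1))
            + (xb ((s + 1) / k₀) - xb (s / k₀))‖) :=
          mul_le_mul_of_nonneg_left (Hnorm i _) (by positivity)
        _ ≤ (m : ℝ)⁻¹ * (ri i * (‖xi i (s + 1) - xi i s‖
            + ‖xb ((s + 1) / k₀) - xb (s / k₀)‖)) := by
          refine mul_le_mul_of_nonneg_left ?_ (by positivity)
          refine mul_le_mul_of_nonneg_left ?_ (hri i).le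
          refine (norm_add_le _ _).trans ?_
          rw [norm_sub_rev (xi i s)]
        _ = (ri i / (m : ℝ)) * (‖xi i (s + 1) - xi i s‖
            + ‖xb ((s + 1) / k₀) - xb (s / k₀)‖) := by ring
        _ ≤ σ / 6 * (‖xi i (s + 1) - xi i s‖ + ‖xb ((s + 1) / k₀) - xb (s / k₀)‖) :=
          mul_le_mul_of_nonneg_right (hri6 i) (by positivity)
    calc ‖_ - _ - _‖ ≤ ‖σ • (xi i s - xi i (s + 1))
          - (m : ℝ)⁻¹ • (gradient (fi i) (xb (s / k₀))
            - gradient (fi i) (xb ((s + 1) / k₀)))‖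
          + ‖(m : ℝ)⁻¹ • H i ((xi i s - xi i (s + 1))
            + (xb ((s + 1) / k₀) - xb (s / k₀)))‖ := norm_sub_le _ _
      _ ≤ (‖σ • (xi i s - xi i (s + 1))‖
          + ‖(m : ℝ)⁻¹ • (gradient (fi i) (xb (s / k₀))
            - gradient (fi i) (xb ((s + 1) / k₀)))‖)
          + ‖(m : ℝ)⁻¹ • H i ((xi i s - xi i (s + 1))
            + (xb ((s + 1) / k₀) - xb (s / k₀)))‖ :=
        add_le_add_left (norm_sub_le _ _) _
      _ ≤ (σ * ‖xi i (s + 1) - xi i s‖ + σ / 6 * ‖xb ((s + 1) / k₀) - xb (s / k₀)‖)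
          + σ / 6 * (‖xi i (s + 1) - xi i s‖ + ‖xb ((s + 1) / k₀) - xb (s / k₀)‖) := by
        rw [hA]; exact add_le_add (add_le_add le_rfl hB) hC
      _ = 7 * σ / 6 * ‖xi i (s + 1) - xi i s‖
          + σ / 3 * ‖xb ((s + 1) / k₀) - xb (s / k₀)‖ := by ring
  have hGv : ‖∑ i, (-(pii i (s + 1)) - σ • (xi i (s + 1) - xb ((s + 1) / k₀)))‖
      ≤ ∑ i, (7 * σ / 6 * ‖xi i (s + 1) - xi i s‖
        + σ / 3 * ‖xb ((s + 1) / k₀) - xb (s / k₀)‖) := by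
    rw [hGv_eq]
    exact (norm_sum_le _ _).trans (Finset.sum_le_sum fun i _ => hzd i)
  -- assemble everything
  have hT0 : (0 : ℝ) ≤ ∑ i, (‖xb ((s + 1) / k₀) - xb (s / k₀)‖ ^ 2
      + ‖xi i (s + 1) - xi i s‖ ^ 2) := by positivity
  have hmain : ‖mkZ (∑ i, (-(pii i (s + 1)) - σ • (xi i (s + 1) - xb ((s + 1) / k₀))))
        (fun i => (m : ℝ)⁻¹ • gradient (fi i) (xi i (s + 1)) + pii i (s + 1)
          + σ • (xi i (s + 1) - xb ((s + 1) / k₀)))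
        (fun i => xi i (s + 1) - xb ((s + 1) / k₀))‖ ^ 2
      ≤ (2 * σ + 1) ^ 2 * ((m : ℝ) * ∑ i, (‖xb ((s + 1) / k₀) - xb (s / k₀)‖ ^ 2
        + ‖xi i (s + 1) - xi i s‖ ^ 2)) := by
    rw [norm_mkZ_sq]
    have hA : ‖∑ i, (-(pii i (s + 1)) - σ • (xi i (s + 1) - xb ((s + 1) / k₀)))‖ ^ 2
        ≤ (m : ℝ) * ∑ i, (7 * σ / 6 * ‖xi i (s + 1) - xi i s‖
          + σ / 3 * ‖xb ((s + 1) / k₀) - xb (s / k₀)‖) ^ 2 := by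
      calc ‖∑ i, (-(pii i (s + 1)) - σ • (xi i (s + 1) - xb ((s + 1) / k₀)))‖ ^ 2
          ≤ (∑ i, (7 * σ / 6 * ‖xi i (s + 1) - xi i s‖
            + σ / 3 * ‖xb ((s + 1) / k₀) - xb (s / k₀)‖)) ^ 2 :=
          pow_le_pow_left₀ (norm_nonneg _) hGv 2
        _ ≤ (m : ℝ) * ∑ i, (7 * σ / 6 * ‖xi i (s + 1) - xi i s‖
            + σ / 3 * ‖xb ((s + 1) / k₀) - xb (s / k₀)‖) ^ 2 := by
          have h := sq_sum_le_card_mul_sum_sq (s := (Finset.univ : Finset (Fin m)))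
            (f := fun i => 7 * σ / 6 * ‖xi i (s + 1) - xi i s‖
              + σ / 3 * ‖xb ((s + 1) / k₀) - xb (s / k₀)‖)
          simpa using h
    have hA2 : ∑ i, (7 * σ / 6 * ‖xi i (s + 1) - xi i s‖
          + σ / 3 * ‖xb ((s + 1) / k₀) - xb (s / k₀)‖) ^ 2
        ≤ 53 / 36 * σ ^ 2 * ∑ i, (‖xb ((s + 1) / k₀) - xb (s / k₀)‖ ^ 2
          + ‖xi i (s + 1) - xi i s‖ ^ 2) := by
      rw [Finset.mul_sum]
      refine Finset.sum_le_sum fun i _ => ?_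
      nlinarith [mul_nonneg (sq_nonneg σ) (sq_nonneg (2 * ‖xi i (s + 1) - xi i s‖
        - 7 * ‖xb ((s + 1) / k₀) - xb (s / k₀)‖))]
    have hB : ∑ i, (‖(m : ℝ)⁻¹ • gradient (fi i) (xi i (s + 1)) + pii i (s + 1)
          + σ • (xi i (s + 1) - xb ((s + 1) / k₀))‖ ^ 2
          + ‖xi i (s + 1) - xb ((s + 1) / k₀)‖ ^ 2)
        ≤ (20 / 81 * σ ^ 2 + 5 / 36) * ∑ i, (‖xb ((s + 1) / k₀) - xb (s / k₀)‖ ^ 2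
          + ‖xi i (s + 1) - xi i s‖ ^ 2) := by
      rw [Finset.mul_sum]
      refine Finset.sum_le_sum fun i _ => ?_
      have hu2 : ‖xi i (s + 1) - xb ((s + 1) / k₀)‖ ^ 2
          ≤ ((2 * ‖xb ((s + 1) / k₀) - xb (s / k₀)‖ + ‖xi i (s + 1) - xi i s‖) / 6) ^ 2 :=
        pow_le_pow_left₀ (norm_nonneg _) (hGP i) 2
      have hx2 : ‖(m : ℝ)⁻¹ • gradient (fi i) (xi i (s + 1)) + pii i (s + 1)
          + σ • (xi i (s + 1) - xb ((s + 1) / k₀))‖ ^ 2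
          ≤ (4 * σ / 3) ^ 2 * ‖xi i (s + 1) - xb ((s + 1) / k₀)‖ ^ 2 := by
        have := pow_le_pow_left₀ (norm_nonneg _) (hGX i) 2
        calc ‖(m : ℝ)⁻¹ • gradient (fi i) (xi i (s + 1)) + pii i (s + 1)
            + σ • (xi i (s + 1) - xb ((s + 1) / k₀))‖ ^ 2
            ≤ ((4 * σ / 3) * ‖xi i (s + 1) - xb ((s + 1) / k₀)‖) ^ 2 := this
          _ = (4 * σ / 3) ^ 2 * ‖xi i (s + 1) - xb ((s + 1) / k₀)‖ ^ 2 := by ring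
      nlinarith [hu2, hx2, sq_nonneg σ,
        mul_nonneg (sq_nonneg σ) (sq_nonneg (‖xb ((s + 1) / k₀) - xb (s / k₀)‖
          - 2 * ‖xi i (s + 1) - xi i s‖)),
        sq_nonneg (‖xb ((s + 1) / k₀) - xb (s / k₀)‖ - 2 * ‖xi i (s + 1) - xi i s‖),
        mul_le_mul_of_nonneg_left hu2 (sq_nonneg σ)]
    have hmT : (0 : ℝ) ≤ (m : ℝ) * ∑ i, (‖xb ((s + 1) / k₀) - xb (s / k₀)‖ ^ 2
        + ‖xi i (s + 1) - xi i s‖ ^ 2) := by positivity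
    have hB' : (20 / 81 * σ ^ 2 + 5 / 36) * (∑ i, (‖xb ((s + 1) / k₀) - xb (s / k₀)‖ ^ 2
          + ‖xi i (s + 1) - xi i s‖ ^ 2))
        ≤ (20 / 81 * σ ^ 2 + 5 / 36) * ((m : ℝ) * ∑ i, (‖xb ((s + 1) / k₀) - xb (s / k₀)‖ ^ 2
          + ‖xi i (s + 1) - xi i s‖ ^ 2)) := by
      refine mul_le_mul_of_nonneg_left ?_ (by positivity)
      nlinarith [hT0, hm1]
    nlinarith [hA, hA2, hB, hB', hmT, hσ, mul_nonneg hmT hσ.le,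
      mul_nonneg hmT (sq_nonneg σ), mul_le_mul_of_nonneg_left hA2 hmR.le]
  calc ‖mkZ (∑ i, (-(pii i (s + 1)) - σ • (xi i (s + 1) - xb ((s + 1) / k₀))))
        (fun i => (m : ℝ)⁻¹ • gradient (fi i) (xi i (s + 1)) + pii i (s + 1)
          + σ • (xi i (s + 1) - xb ((s + 1) / k₀)))
        (fun i => xi i (s + 1) - xb ((s + 1) / k₀))‖
      = Real.sqrt (‖mkZ (∑ i, (-(pii i (s + 1)) - σ • (xi i (s + 1) - xb ((s + 1) / k₀))))
        (fun i => (m : ℝ)⁻¹ • gradient (fi i) (xi i (s + 1)) + pii i (s + 1)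
          + σ • (xi i (s + 1) - xb ((s + 1) / k₀)))
        (fun i => xi i (s + 1) - xb ((s + 1) / k₀))‖ ^ 2) :=
      (Real.sqrt_sq (norm_nonneg _)).symm
    _ ≤ Real.sqrt ((2 * σ + 1) ^ 2 * ((m : ℝ) * ∑ i, (‖xb ((s + 1) / k₀) - xb (s / k₀)‖ ^ 2
        + ‖xi i (s + 1) - xi i s‖ ^ 2))) := Real.sqrt_le_sqrt hmain
    _ = (2 * σ + 1) * Real.sqrt ((m : ℝ) * ∑ i, (‖xb ((s + 1) / k₀) - xb (s / k₀)‖ ^ 2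
        + ‖xi i (s + 1) - xi i s‖ ^ 2)) := by
      rw [Real.sqrt_mul (by positivity), Real.sqrt_sq (by positivity)]
end
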